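/- Let {F_k} be an orthogonal system in S with ⋃_k supp(F_k) = ℕ and V an orthogonal preserving QSO with V(e_k) = F_k. Then for any α ⊆ ℕ and any x in the relative interior riΓ_α = {x ∈ S : x_i > 0 ∀ i ∈ α, x_i = 0 ∀ i ∉ α}, one has supp(V(x)) = ⋃_{ℓ ∈ α} supp(F_ℓ); in particular V maps riΓ_α into riΓ_{α'} where α' = ⋃_{ℓ ∈ α} supp(F_ℓ). -/
import Mathlib


open Function

def IsSimplexPt (x : ℕ → ℝ) : Prop := (∀ i, 0 ≤ x i) ∧ HasSum x 1

def Orth (x y : ℕ → ℝ) : Prop := Disjoint (support x) (support y)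

def QSOCoef (P : ℕ → ℕ → ℕ → ℝ) : Prop :=
  (∀ i j k, 0 ≤ P i j k) ∧ (∀ i j k, P i j k = P j i k) ∧
  (∀ i j, HasSum (fun k => P i j k) 1)

noncomputable def QSO (P : ℕ → ℕ → ℕ → ℝ) (x : ℕ → ℝ) : ℕ → ℝ :=
  fun k => ∑' i, ∑' j, P i j k * x i * x j

def IsOP (V : (ℕ → ℝ) → (ℕ → ℝ)) : Prop :=
  ∀ x y, IsSimplexPt x → IsSimplexPt y → Orth x y → Orth (V x) (V y)

def stdBasis (k : ℕ) : ℕ → ℝ := fun i => if i = k then 1 else 0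

def riFace (α : Set ℕ) : Set (ℕ → ℝ) :=
  {x | IsSimplexPt x ∧ (∀ i ∈ α, 0 < x i) ∧ ∀ i ∉ α, x i = 0}

section Aux

variable {Pc : ℕ → ℕ → ℕ → ℝ} {x : ℕ → ℝ}

lemma hasSum_stdBasis (k : ℕ) : HasSum (stdBasis k) 1 := hasSum_ite_eq k 1

lemma stdBasis_simplex (k : ℕ) : IsSimplexPt (stdBasis k) :=
  ⟨fun i => by unfold stdBasis; positivity, hasSum_stdBasis k⟩

lemma P_le_one (hP : QSOCoef Pc) (i j k : ℕ) : Pc i j k ≤ 1 :=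
  le_hasSum (hP.2.2 i j) k fun _ _ => hP.1 _ _ _

lemma summable_inner (hP : QSOCoef Pc) (hx : IsSimplexPt x) (i k : ℕ) :
    Summable fun j => Pc i j k * x i * x j := by
  refine Summable.of_nonneg_of_le
    (fun j => by have := hP.1 i j k; have := hx.1 i; have := hx.1 j; positivity)
    (fun j => ?_) (hx.2.summable.mul_left (x i))
  have h1 : Pc i j k * x i ≤ x i := by
    nlinarith [hP.1 i j k, hx.1 i, P_le_one hP i j k]
  exact mul_le_mul_of_nonneg_right h1 (hx.1 j)

lemma inner_le (hP : QSOCoef Pc) (hx : IsSimplexPt x) (i k : ℕ) :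
    ∑' j, Pc i j k * x i * x j ≤ x i := by
  have h : ∑' j, Pc i j k * x i * x j ≤ ∑' j, x i * x j := by
    refine Summable.tsum_le_tsum (fun j => ?_) (summable_inner hP hx i k) (hx.2.summable.mul_left (x i))
    have h1 : Pc i j k * x i ≤ x i := by
      nlinarith [hP.1 i j k, hx.1 i, P_le_one hP i j k]
    exact mul_le_mul_of_nonneg_right h1 (hx.1 j)
  calc ∑' j, Pc i j k * x i * x j ≤ ∑' j, x i * x j := h
    _ = x i * ∑' j, x j := tsum_mul_left
    _ = x i * 1 := by rw [hx.2.tsum_eq]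
    _ = x i := mul_one _

lemma summable_outer (hP : QSOCoef Pc) (hx : IsSimplexPt x) (k : ℕ) :
    Summable fun i => ∑' j, Pc i j k * x i * x j :=
  Summable.of_nonneg_of_le
    (fun i => tsum_nonneg fun j => by
      have := hP.1 i j k; have := hx.1 i; have := hx.1 j; positivity)
    (fun i => inner_le hP hx i k) hx.2.summable

lemma qso_nonneg (hP : QSOCoef Pc) (hx : IsSimplexPt x) (k : ℕ) : 0 ≤ QSO Pc x k :=
  tsum_nonneg fun i => tsum_nonneg fun j => by
    have := hP.1 i j k; have := hx.1 i; have := hx.1 j; positivity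

lemma term_le_qso (hP : QSOCoef Pc) (hx : IsSimplexPt x) (i j k : ℕ) :
    Pc i j k * x i * x j ≤ QSO Pc x k := by
  have h1 : Pc i j k * x i * x j ≤ ∑' j, Pc i j k * x i * x j :=
    Summable.le_tsum (summable_inner hP hx i k) j fun b _ => by
      have := hP.1 i b k; have := hx.1 i; have := hx.1 b; positivity
  have h2 : ∑' j, Pc i j k * x i * x j ≤ QSO Pc x k :=
    Summable.le_tsum (summable_outer hP hx k) i fun a _ => tsum_nonneg fun b => by
      have := hP.1 a b k; have := hx.1 a; have := hx.1 b; positivity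
  exact h1.trans h2

lemma qso_ne_zero (hP : QSOCoef Pc) (hx : IsSimplexPt x) {k : ℕ} (h : QSO Pc x k ≠ 0) :
    ∃ i j, x i ≠ 0 ∧ x j ≠ 0 ∧ Pc i j k ≠ 0 := by
  by_contra hc
  push_neg at hc
  apply h
  have hz : ∀ i j : ℕ, Pc i j k * x i * x j = 0 := by
    intro i j
    by_cases hi : x i = 0
    · simp [hi]
    by_cases hj : x j = 0
    · simp [hj]
    simp [hc i j hi hj]
  unfold QSO
  simp [hz]

lemma qso_stdBasis (i k : ℕ) : QSO Pc (stdBasis i) k = Pc i i k := by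
  unfold QSO
  calc ∑' a, ∑' b, Pc a b k * stdBasis i a * stdBasis i b
      = ∑' b, Pc i b k * stdBasis i i * stdBasis i b :=
        tsum_eq_single i (fun a ha => by simp [stdBasis, ha])
    _ = Pc i i k * stdBasis i i * stdBasis i i :=
        tsum_eq_single i (fun b hb => by simp [stdBasis, hb])
    _ = Pc i i k := by simp [stdBasis]

lemma qso_hasSum (hP : QSOCoef Pc) (hx : IsSimplexPt x) : HasSum (QSO Pc x) 1 := by
  have hfnn : ∀ i j k : ℕ, (0:ℝ) ≤ Pc i j k * x i * x j := fun i j k => by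
    have := hP.1 i j k; have := hx.1 i; have := hx.1 j; positivity
  have hfib : ∀ i j : ℕ, HasSum (fun k => Pc i j k * x i * x j) (x i * x j) := by
    intro i j
    have := (hP.2.2 i j).mul_right (x i * x j)
    simpa [mul_assoc, one_mul] using this
  have hGs : Summable fun p : ℕ × ℕ => x p.1 * x p.2 :=
    hx.2.summable.mul_of_nonneg hx.2.summable hx.1 hx.1
  have hG : HasSum (fun p : ℕ × ℕ => x p.1 * x p.2) 1 := by
    simpa using hx.2.mul hx.2 hGs
  have hT : Summable (fun q : (ℕ × ℕ) × ℕ => Pc q.1.1 q.1.2 q.2 * x q.1.1 * x q.1.2) := by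
    rw [summable_prod_of_nonneg (fun q => hfnn _ _ _)]
    refine ⟨fun p => (hfib p.1 p.2).summable, ?_⟩
    exact hGs.congr fun p => ((hfib p.1 p.2).tsum_eq).symm
  have hT1 : HasSum (fun q : (ℕ × ℕ) × ℕ => Pc q.1.1 q.1.2 q.2 * x q.1.1 * x q.1.2) 1 := by
    refine hT.hasSum_iff.2 ?_
    rw [Summable.tsum_prod' hT (fun p => (hfib p.1 p.2).summable)]
    calc ∑' (p : ℕ × ℕ), ∑' k, Pc p.1 p.2 k * x p.1 * x p.2
        = ∑' p : ℕ × ℕ, x p.1 * x p.2 := tsum_congr fun p => (hfib p.1 p.2).tsum_eq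
      _ = 1 := hG.tsum_eq
  have hswap : HasSum (fun q : ℕ × (ℕ × ℕ) => Pc q.2.1 q.2.2 q.1 * x q.2.1 * x q.2.2) 1 :=
    (Equiv.prodComm ℕ (ℕ × ℕ)).hasSum_iff.2 hT1
  refine hswap.prod_fiberwise fun k => ?_
  have hSk : Summable fun p : ℕ × ℕ => Pc p.1 p.2 k * x p.1 * x p.2 := by
    rw [summable_prod_of_nonneg (fun q => hfnn _ _ _)]
    exact ⟨fun i => summable_inner hP hx i k, summable_outer hP hx k⟩
  refine hSk.hasSum_iff.2 ?_
  rw [Summable.tsum_prod' hSk (fun i => summable_inner hP hx i k)]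
  rfl

end Aux

theorem op_maps_relint (Pc : ℕ → ℕ → ℕ → ℝ) (F : ℕ → ℕ → ℝ)
    (hP : QSOCoef Pc) (hF : ∀ k, IsSimplexPt (F k))
    (horth : ∀ i j : ℕ, i ≠ j → Orth (F i) (F j))
    (hcov : (⋃ k, support (F k)) = Set.univ)
    (hOP : IsOP (QSO Pc))
    (hVe : ∀ k, QSO Pc (stdBasis k) = F k) :
    ∀ α : Set ℕ, ∀ x ∈ riFace α,
      support (QSO Pc x) = (⋃ l ∈ α, support (F l)) ∧
      QSO Pc x ∈ riFace (⋃ l ∈ α, support (F l)) := by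
  have hPii : ∀ i, Pc i i = F i := by
    intro i; funext k; rw [← hVe i, qso_stdBasis]
  -- mixed support lemma
  have hmixed : ∀ i j k : ℕ, i ≠ j → Pc i j k ≠ 0 → F i k ≠ 0 ∨ F j k ≠ 0 := by
    intro i j k hij hk
    by_contra hc
    push_neg at hc
    obtain ⟨hc1, hc2⟩ := hc
    have hkcov : k ∈ ⋃ m, support (F m) := hcov.symm ▸ Set.mem_univ k
    obtain ⟨m, hm⟩ := Set.mem_iUnion.1 hkcov
    have hm : F m k ≠ 0 := hm
    have hmi : m ≠ i := fun h => hm (h ▸ hc1)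
    have hmj : m ≠ j := fun h => hm (h ▸ hc2)
    set y : ℕ → ℝ := fun n => (stdBasis i n + stdBasis j n) * 2⁻¹ with hy_def
    have hy : IsSimplexPt y := by
      constructor
      · intro n
        have h1 := (stdBasis_simplex i).1 n
        have h2 := (stdBasis_simplex j).1 n
        simp only [hy_def]; positivity
      · have h := ((hasSum_stdBasis i).add (hasSum_stdBasis j)).mul_right (2⁻¹ : ℝ)
        have he : ((1:ℝ) + 1) * 2⁻¹ = 1 := by norm_num
        rw [he] at h
        exact h
    have horthy : Orth y (stdBasis m) := by
      rw [Orth, Set.disjoint_left]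
      intro a ha hb
      have hab : a = i ∨ a = j := by
        by_contra h
        push_neg at h
        apply ha
        simp [hy_def, stdBasis, h.1, h.2]
      have ham : a ≠ m := by rcases hab with h | h <;> simp [h, hmi.symm, hmj.symm]
      exact hb (by simp [stdBasis, ham])
    have hdisj := hOP y (stdBasis m) hy (stdBasis_simplex m) horthy
    rw [hVe m] at hdisj
    have hyi : y i = 2⁻¹ := by simp [hy_def, stdBasis, hij]
    have hyj : y j = 2⁻¹ := by simp [hy_def, stdBasis, hij.symm]
    have h1 : Pc i j k * y i * y j ≤ QSO Pc y k := term_le_qso hP hy i j k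
    have h2 : 0 < Pc i j k * y i * y j := by
      rw [hyi, hyj]
      have := (hP.1 i j k).lt_of_ne (Ne.symm hk)
      positivity
    have hky : QSO Pc y k ≠ 0 := ne_of_gt (lt_of_lt_of_le h2 h1)
    exact Set.disjoint_left.1 hdisj (mem_support.2 hky) (mem_support.2 hm)
  intro α x hx
  obtain ⟨hxs, hxpos, hxzero⟩ := hx
  have hsupp : support (QSO Pc x) = ⋃ l ∈ α, support (F l) := by
    ext k
    simp only [mem_support, Set.mem_iUnion, exists_prop]
    constructor
    · intro hk
      obtain ⟨i, j, hxi, hxj, hPk⟩ := qso_ne_zero hP hxs hk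
      have hiα : i ∈ α := by by_contra h; exact hxi (hxzero i h)
      have hjα : j ∈ α := by by_contra h; exact hxj (hxzero j h)
      by_cases hij : i = j
      · subst hij
        refine ⟨i, hiα, ?_⟩
        rwa [← hPii i]
      · rcases hmixed i j k hij hPk with h | h
        · exact ⟨i, hiα, h⟩
        · exact ⟨j, hjα, h⟩
    · rintro ⟨l, hl, hFl⟩
      have hxl := hxpos l hl
      have h1 : Pc l l k * x l * x l ≤ QSO Pc x k := term_le_qso hP hxs l l k
      have h2 : 0 < Pc l l k * x l * x l := by
        rw [hPii l]
        have : 0 < F l k := ((hF l).1 k).lt_of_ne (Ne.symm hFl)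
        positivity
      exact ne_of_gt (lt_of_lt_of_le h2 h1)
  refine ⟨hsupp, ⟨⟨fun k => qso_nonneg hP hxs k, qso_hasSum hP hxs⟩, ?_, ?_⟩⟩
  · intro i hi
    have hmem : i ∈ support (QSO Pc x) := hsupp ▸ hi
    exact (qso_nonneg hP hxs i).lt_of_ne (Ne.symm hmem)
  · intro i hi
    by_contra h
    exact hi (hsupp ▸ mem_support.2 h)
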